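/- arXiv:1812.04804 — 5 statements merged into one kernel-verified Lean document; each statement's English description precedes it below -/
import Mathlib

section
/- Let R be an involutive symmetry on V⊗V. For u ≠ v define the rational current R-matrix R(u,v) := R − (u−v)⁻¹·I. Then R(u,v) satisfies the quantum Yang–Baxter equation with spectral parameters: R₁₂(u,v)·R₂₃(u,w)·R₁₂(v,w) = R₂₃(v,w)·R₁₂(u,w)·R₂₃(u,v) as operators on V^{⊗3}, for all pairwise distinct u, v, w ∈ ℂ. -/
open Matrix BigOperators Kronecker

noncomputable section

/-- Operators on `V ⊗ V`, `V = ℂ^N`, identified with their matrices. -/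
abbrev Op2 (N : ℕ) := Matrix (Fin N × Fin N) (Fin N × Fin N) ℂ

/-- Operators on `V^{⊗n}`. -/
abbrev OpN (n N : ℕ) := Matrix (Fin n → Fin N) (Fin n → Fin N) ℂ

/-- Placement `B_{m+1, m+2}` (1-indexed), i.e. a two-leg operator `B` acting on the adjacent
legs `m, m+1` (0-indexed) of `V^{⊗n}`, identity elsewhere. -/
def adjPlace (n N : ℕ) (B : Op2 N) (m : ℕ) : OpN n N :=
  if h : m + 1 < n then
    Matrix.of fun x y =>
      B (x ⟨m, Nat.lt_of_succ_lt h⟩, x ⟨m + 1, h⟩) (y ⟨m, Nat.lt_of_succ_lt h⟩, y ⟨m + 1, h⟩) *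
        ∏ j : Fin n, if (j : ℕ) = m ∨ (j : ℕ) = m + 1 then 1 else (if x j = y j then 1 else 0)
  else 1


def e0 (N : ℕ) : (Fin 3 → Fin N) ≃ (Fin N × Fin N) × Fin N where
  toFun x := ((x 0, x 1), x 2)
  invFun p := ![p.1.1, p.1.2, p.2]
  left_inv x := by funext j; fin_cases j <;> rfl
  right_inv p := rfl

def e1 (N : ℕ) : (Fin 3 → Fin N) ≃ Fin N × (Fin N × Fin N) where
  toFun x := (x 0, (x 1, x 2))
  invFun p := ![p.1, p.2.1, p.2.2]
  left_inv x := by funext j; fin_cases j <;> rfl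
  right_inv p := rfl

lemma place0 (N : ℕ) (B : Op2 N) :
    adjPlace 3 N B 0 = (B ⊗ₖ (1 : Matrix (Fin N) (Fin N) ℂ)).submatrix (e0 N) (e0 N) := by
  ext x y
  simp [adjPlace, e0, Fin.prod_univ_three, Matrix.one_apply, Matrix.kroneckerMap_apply]
  rfl

lemma place1 (N : ℕ) (B : Op2 N) :
    adjPlace 3 N B 1 = ((1 : Matrix (Fin N) (Fin N) ℂ) ⊗ₖ B).submatrix (e1 N) (e1 N) := by
  ext x y
  simp [adjPlace, e1, Fin.prod_univ_three, Matrix.one_apply, Matrix.kroneckerMap_apply, mul_comm]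
  rfl

lemma mul0 (N : ℕ) (B C : Op2 N) :
    adjPlace 3 N B 0 * adjPlace 3 N C 0 = adjPlace 3 N (B * C) 0 := by
  rw [place0, place0, place0, Matrix.submatrix_mul_equiv, ← Matrix.mul_kronecker_mul, one_mul]

lemma mul1 (N : ℕ) (B C : Op2 N) :
    adjPlace 3 N B 1 * adjPlace 3 N C 1 = adjPlace 3 N (B * C) 1 := by
  rw [place1, place1, place1, Matrix.submatrix_mul_equiv, ← Matrix.mul_kronecker_mul, one_mul]

lemma one0 (N : ℕ) : adjPlace 3 N 1 0 = 1 := by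
  rw [place0, Matrix.one_kronecker_one, Matrix.submatrix_one_equiv]

lemma one1 (N : ℕ) : adjPlace 3 N 1 1 = 1 := by
  rw [place1, Matrix.one_kronecker_one, Matrix.submatrix_one_equiv]

lemma lin (N : ℕ) (B : Op2 N) (s : ℂ) (m : ℕ) (h : m + 1 < 3) :
    adjPlace 3 N (B - s • 1) m = adjPlace 3 N B m - s • adjPlace 3 N 1 m := by
  unfold adjPlace
  rw [dif_pos h, dif_pos h, dif_pos h]
  ext x y
  simp [Matrix.sub_apply, sub_mul, smul_mul_assoc, mul_assoc]

/-- if `R` is an involutive symmetry, then the rational current `R`-matrix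
`R(u,v) = R - (u-v)⁻¹ I` satisfies the quantum Yang–Baxter equation with spectral parameters
`R₁₂(u,v) R₂₃(u,w) R₁₂(v,w) = R₂₃(v,w) R₁₂(u,w) R₂₃(u,v)` on `V^{⊗3}`. -/
theorem stmt_0 (N : ℕ) (hN : 1 ≤ N) (R : Op2 N)
    (hbraid : adjPlace 3 N R 0 * adjPlace 3 N R 1 * adjPlace 3 N R 0 =
      adjPlace 3 N R 1 * adjPlace 3 N R 0 * adjPlace 3 N R 1)
    (hinv : R * R = 1)
    (u v w : ℂ) (huv : u ≠ v) (huw : u ≠ w) (hvw : v ≠ w) :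
    adjPlace 3 N (R - (u - v)⁻¹ • 1) 0 * adjPlace 3 N (R - (u - w)⁻¹ • 1) 1 *
        adjPlace 3 N (R - (v - w)⁻¹ • 1) 0 =
      adjPlace 3 N (R - (v - w)⁻¹ • 1) 1 * adjPlace 3 N (R - (u - w)⁻¹ • 1) 0 *
        adjPlace 3 N (R - (u - v)⁻¹ • 1) 1 := by
  have h01 : (0 : ℕ) + 1 < 3 := by norm_num
  have h11 : (1 : ℕ) + 1 < 3 := by norm_num
  rw [lin N R _ 0 h01, lin N R _ 1 h11, lin N R _ 0 h01, lin N R _ 1 h11,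
    lin N R _ 0 h01, lin N R _ 1 h11, one0, one1]
  have h1 : u - v ≠ 0 := sub_ne_zero.mpr huv
  have h2 : u - w ≠ 0 := sub_ne_zero.mpr huw
  have h3 : v - w ≠ 0 := sub_ne_zero.mpr hvw
  have h1' : -v + u ≠ 0 := by rw [neg_add_eq_sub]; exact h1
  have h2' : -w + u ≠ 0 := by rw [neg_add_eq_sub]; exact h2
  have h3' : -w + v ≠ 0 := by rw [neg_add_eq_sub]; exact h3
  set A : OpN 3 N := adjPlace 3 N R 0 with hA
  set B : OpN 3 N := adjPlace 3 N R 1 with hB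
  have hA2 : A * A = 1 := by rw [hA, mul0, hinv, one0]
  have hB2 : B * B = 1 := by rw [hB, mul1, hinv, one1]
  simp only [sub_mul, mul_sub, smul_mul_assoc, mul_smul_comm, mul_one, one_mul, smul_smul,
    smul_sub, sub_sub_cancel]
  rw [hA2, hB2, hbraid]
  match_scalars <;> field_simp <;> ring
end
end

section
/- Let R be a Hecke symmetry on V⊗V with parameter q (q ∈ ℂ, q ≠ ±1, q ≠ 0). For u ≠ v define the trigonometric current R-matrix R(u,v) := R − (q−q⁻¹)·u·(u−v)⁻¹·I. Then R(u,v) satisfies the quantum Yang–Baxter equation with spectral parameters: R₁₂(u,v)·R₂₃(u,w)·R₁₂(v,w) = R₂₃(v,w)·R₁₂(u,w)·R₂₃(u,v) as operators on V^{⊗3}, for all pairwise distinct u, v, w ∈ ℂ. -/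
/-!
Write `X = R₁₂`, `Y = R₂₃` and `t = q - q⁻¹`. The Hecke condition is the quadratic relation
`X² = t X + q q⁻¹` (likewise for `Y`), and placing an operator on two adjacent legs is an algebra
homomorphism, being `B ↦ B ⊗ 1` up to a permutation of the basis. Expanding
`(X - a)(Y - b)(X - c) - (Y - c)(X - b)(Y - a)` with the quadratic and braid relations leaves
`(ab + bc - ac - tb)(X - Y)`, and for the trigonometric weights `a = t u/(u - v)`,
`b = t u/(u - w)`, `c = t v/(v - w)` the scalar factor vanishes.
-/

open Matrix BigOperators

noncomputable section

open scoped Kronecker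

def kroneckerOneAlgHom (R m ι : Type*) [CommSemiring R] [Fintype m] [DecidableEq m] [Fintype ι]
    [DecidableEq ι] : Matrix m m R →ₐ[R] Matrix (m × ι) (m × ι) R :=
  { toFun A := A ⊗ₖ (1 : Matrix ι ι R)
    map_one' := one_kronecker_one
    map_mul' A B := by simpa using mul_kronecker_mul A B (1 : Matrix ι ι R) 1
    map_zero' := zero_kronecker _
    map_add' A B := add_kronecker A B _
    commutes' r := by simp [Algebra.algebraMap_eq_smul_one, smul_kronecker] }

section Placement

variable {n N m : ℕ}

abbrev OtherLegs (n m : ℕ) := {j : Fin n // ¬((j : ℕ) = m ∨ (j : ℕ) = m + 1)}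

def legSplit (h : m + 1 < n) : (Fin n → Fin N) ≃ (Fin N × Fin N) × (OtherLegs n m → Fin N) where
  toFun x := ((x ⟨m, by omega⟩, x ⟨m + 1, h⟩), fun j => x j)
  invFun a j :=
    if hm : (j : ℕ) = m then a.1.1 else if hm' : (j : ℕ) = m + 1 then a.1.2 else a.2 ⟨j, by omega⟩
  left_inv x := by
    funext j
    dsimp only
    split_ifs with h₀ h₁
    · exact congrArg x (Fin.ext h₀.symm)
    · exact congrArg x (Fin.ext h₁.symm)
    · rfl
  right_inv a := by
    obtain ⟨⟨a₁, a₂⟩, r⟩ := a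
    ext j
    · simp
    · simp
    · obtain ⟨j, hj⟩ := j
      simp only [not_or] at hj
      simp [hj.1, hj.2]

theorem adjPlace_eq_submatrix_kronecker (h : m + 1 < n) (B : Op2 N) :
    adjPlace n N B m = (B ⊗ₖ (1 : Matrix (OtherLegs n m → Fin N) _ ℂ)).submatrix
      (legSplit h) (legSplit h) := by
  ext x y
  rw [adjPlace, dif_pos h, of_apply, submatrix_apply, kronecker_apply, one_apply]
  congr 1
  have hfactor : ∀ j : Fin n, (if (j : ℕ) = m ∨ (j : ℕ) = m + 1 then (1 : ℂ)
      else if x j = y j then 1 else 0) = if (¬((j : ℕ) = m ∨ (j : ℕ) = m + 1) → x j = y j)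
      then 1 else 0 := fun j => by split_ifs <;> tauto
  simp_rw [hfactor, Fintype.prod_boole]
  simp [legSplit, funext_iff]

def adjPlaceAlgHom (h : m + 1 < n) : Op2 N →ₐ[ℂ] OpN n N :=
  (reindexAlgEquiv ℂ ℂ (legSplit h).symm).toAlgHom.comp
    (kroneckerOneAlgHom ℂ (Fin N × Fin N) (OtherLegs n m → Fin N))

theorem adjPlaceAlgHom_apply (h : m + 1 < n) (B : Op2 N) :
    adjPlaceAlgHom h B = adjPlace n N B m :=
  (adjPlace_eq_submatrix_kronecker h B).symm

end Placement

theorem mul_self_eq_of_sub_mul_add_eq_zero {K A : Type*} [CommRing K] [Ring A] [Algebra K A]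
    {X : A} {α β : K} (h : (X - α • 1) * (X + β • 1) = 0) :
    X * X = (α - β) • X + (α * β) • 1 := by
  rw [← sub_eq_zero, ← h]
  simp only [sub_mul, mul_add, smul_mul_assoc, mul_smul_comm, one_mul, mul_one]
  module

theorem yangBaxter_baxterization {K A : Type*} [CommRing K] [Ring A] [Algebra K A] {X Y : A}
    {t s a b c : K} (hbraid : X * Y * X = Y * X * Y) (hX : X * X = t • X + s • 1)
    (hY : Y * Y = t • Y + s • 1) (habc : a * b + b * c - a * c = t * b) :
    (X - a • 1) * (Y - b • 1) * (X - c • 1) = (Y - c • 1) * (X - b • 1) * (Y - a • 1) := by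
  simp only [sub_mul, mul_sub, smul_mul_assoc, mul_smul_comm, one_mul, mul_one, mul_assoc]
  simp only [← mul_assoc, hX, hY, hbraid]
  linear_combination (norm := module) habc • (X - Y)

def trigWeight {K : Type*} [Field K] (t u v : K) : K := t * u * (u - v)⁻¹

theorem trigWeight_mul_add_mul_sub_mul {K : Type*} [Field K] (t : K) {u v w : K} (huv : u ≠ v)
    (huw : u ≠ w) (hvw : v ≠ w) :
    trigWeight t u v * trigWeight t u w + trigWeight t u w * trigWeight t v w
      - trigWeight t u v * trigWeight t v w = t * trigWeight t u w := by
  have huv' := sub_ne_zero.mpr huv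
  have huw' := sub_ne_zero.mpr huw
  have hvw' := sub_ne_zero.mpr hvw
  simp only [trigWeight]
  field_simp
  ring

theorem stmt_1_general (N : ℕ) (R : Op2 N) (q : ℂ)
    (hbraid : adjPlace 3 N R 0 * adjPlace 3 N R 1 * adjPlace 3 N R 0 =
      adjPlace 3 N R 1 * adjPlace 3 N R 0 * adjPlace 3 N R 1)
    (hHecke : (R - q • 1) * (R + q⁻¹ • 1) = 0)
    (u v w : ℂ) (huv : u ≠ v) (huw : u ≠ w) (hvw : v ≠ w) :
    adjPlace 3 N (R - ((q - q⁻¹) * u * (u - v)⁻¹) • 1) 0 *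
        adjPlace 3 N (R - ((q - q⁻¹) * u * (u - w)⁻¹) • 1) 1 *
        adjPlace 3 N (R - ((q - q⁻¹) * v * (v - w)⁻¹) • 1) 0 =
      adjPlace 3 N (R - ((q - q⁻¹) * v * (v - w)⁻¹) • 1) 1 *
        adjPlace 3 N (R - ((q - q⁻¹) * u * (u - w)⁻¹) • 1) 0 *
        adjPlace 3 N (R - ((q - q⁻¹) * u * (u - v)⁻¹) • 1) 1 := by
  have hsq := mul_self_eq_of_sub_mul_add_eq_zero hHecke
  have h₀ : 0 + 1 < 3 := by norm_num
  have h₁ : 1 + 1 < 3 := by norm_num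
  have hsq₀ := congrArg (adjPlaceAlgHom (N := N) h₀) hsq
  have hsq₁ := congrArg (adjPlaceAlgHom (N := N) h₁) hsq
  simp only [← adjPlaceAlgHom_apply h₀, ← adjPlaceAlgHom_apply h₁, map_sub, map_add, map_mul,
    map_smul, map_one] at hbraid hsq₀ hsq₁ ⊢
  exact yangBaxter_baxterization hbraid hsq₀ hsq₁ (trigWeight_mul_add_mul_sub_mul _ huv huw hvw)

/-- if `R` is a Hecke symmetry with parameter `q` (`q ≠ ±1`, `q ≠ 0`), then the
trigonometric current `R`-matrix `R(u,v) = R - (q-q⁻¹) u (u-v)⁻¹ I` satisfies the quantum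
Yang–Baxter equation with spectral parameters on `V^{⊗3}`. -/
theorem stmt_1 (N : ℕ) (hN : 1 ≤ N) (R : Op2 N) (q : ℂ)
    (hq1 : q ≠ 1) (hq2 : q ≠ -1) (hq0 : q ≠ 0)
    (hbraid : adjPlace 3 N R 0 * adjPlace 3 N R 1 * adjPlace 3 N R 0 =
      adjPlace 3 N R 1 * adjPlace 3 N R 0 * adjPlace 3 N R 1)
    (hHecke : (R - q • 1) * (R + q⁻¹ • 1) = 0)
    (u v w : ℂ) (huv : u ≠ v) (huw : u ≠ w) (hvw : v ≠ w) :
    adjPlace 3 N (R - ((q - q⁻¹) * u * (u - v)⁻¹) • 1) 0 *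
        adjPlace 3 N (R - ((q - q⁻¹) * u * (u - w)⁻¹) • 1) 1 *
        adjPlace 3 N (R - ((q - q⁻¹) * v * (v - w)⁻¹) • 1) 0 =
      adjPlace 3 N (R - ((q - q⁻¹) * v * (v - w)⁻¹) • 1) 1 *
        adjPlace 3 N (R - ((q - q⁻¹) * u * (u - w)⁻¹) • 1) 0 *
        adjPlace 3 N (R - ((q - q⁻¹) * u * (u - v)⁻¹) • 1) 1 :=
  stmt_1_general N R q hbraid hHecke u v w huv huw hvw
end
end

section
/- Let F be an involutive symmetry on V⊗V. For u ≠ v define the braided rational r-matrix r(u,v) := (u−v)⁻¹·F. Then: (i) r_{\bar{2}\bar{1}}(v,u) + r_{\bar{1}\bar{2}}(u,v) = 0 on V⊗V, where r_{\bar{1}\bar{2}}(u,v) = r(u,v) and r_{\bar{2}\bar{1}}(v,u) = F·r(v,u)·F; and (ii) for all pairwise distinct u, v, w ∈ ℂ the braided classical Yang–Baxter equation holds on V^{⊗3}: [r_{\bar{1}\bar{2}}(u,v), r_{\bar{1}\bar{3}}(u,w)] + [r_{\bar{1}\bar{2}}(u,v), r_{\bar{2}\bar{3}}(v,w)] + [r_{\bar{1}\bar{3}}(u,w),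 r_{\bar{2}\bar{3}}(v,w)] = 0, where [·,·] is the commutator. -/
open Matrix BigOperators

noncomputable section

/-- `F_{k-1,k} ⋯ F_{1,2}` (1-indexed positions; empty product for `k ≤ 1`). -/
def chainC (n N : ℕ) (F : Op2 N) (k : ℕ) : OpN n N :=
  ((List.range (k - 1)).reverse.map (adjPlace n N F)).prod

/-- `F_{l-1,l} ⋯ F_{2,3}` (1-indexed positions; empty product for `l ≤ 2`). -/
def chainD (n N : ℕ) (F : Op2 N) (l : ℕ) : OpN n N :=
  ((List.range' 1 (l - 2)).reverse.map (adjPlace n N F)).prod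

/-- `F_{1,2}⁻¹ ⋯ F_{k-1,k}⁻¹` (built from a given inverse `Finv` of `F`). -/
def chainCInv (n N : ℕ) (Finv : Op2 N) (k : ℕ) : OpN n N :=
  ((List.range (k - 1)).map (adjPlace n N Finv)).prod

/-- `F_{2,3}⁻¹ ⋯ F_{l-1,l}⁻¹`. -/
def chainDInv (n N : ℕ) (Finv : Op2 N) (l : ℕ) : OpN n N :=
  ((List.range' 1 (l - 2)).map (adjPlace n N Finv)).prod

/-- The `F`-shifted placement
`B_{\bar k \bar l} = (F_{k−1,k}⋯F_{1,2})(F_{l−1,l}⋯F_{2,3}) B₁₂ (F_{2,3}⁻¹⋯F_{l−1,l}⁻¹)(F_{1,2}⁻¹⋯F_{k−1,k}⁻¹)`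
for distinct 1-indexed positions `k, l`. -/
def bar2 (n N : ℕ) (F Finv B : Op2 N) (k l : ℕ) : OpN n N :=
  chainC n N F k * chainD n N F l * adjPlace n N B 0 * chainDInv n N Finv l * chainCInv n N Finv k

namespace Stmt6Aux

open Kronecker

def e0 (N : ℕ) : (Fin N × Fin N) × Fin N ≃ (Fin 3 → Fin N) where
  toFun p := ![p.1.1, p.1.2, p.2]
  invFun f := ((f 0, f 1), f 2)
  left_inv p := rfl
  right_inv f := by
    funext i
    fin_cases i <;> rfl

def e1 (N : ℕ) : Fin N × (Fin N × Fin N) ≃ (Fin 3 → Fin N) where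
  toFun p := ![p.1, p.2.1, p.2.2]
  invFun f := (f 0, (f 1, f 2))
  left_inv p := rfl
  right_inv f := by
    funext i
    fin_cases i <;> rfl

lemma adj0 (N : ℕ) (B : Op2 N) :
    adjPlace 3 N B 0 = (B ⊗ₖ (1 : Matrix (Fin N) (Fin N) ℂ)).submatrix (e0 N).symm (e0 N).symm := by
  ext x y
  simp [adjPlace, e0, Fin.prod_univ_three, Matrix.kroneckerMap_apply, Matrix.one_apply]
  rfl

lemma adj1 (N : ℕ) (B : Op2 N) :
    adjPlace 3 N B 1 = ((1 : Matrix (Fin N) (Fin N) ℂ) ⊗ₖ B).submatrix (e1 N).symm (e1 N).symm := by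
  ext x y
  simp [adjPlace, e1, Fin.prod_univ_three, Matrix.kroneckerMap_apply, Matrix.one_apply, mul_comm]
  rfl

lemma adj_mul (N : ℕ) (X Y : Op2 N) (m : ℕ) (hm : m < 2) :
    adjPlace 3 N X m * adjPlace 3 N Y m = adjPlace 3 N (X * Y) m := by
  interval_cases m
  · rw [adj0, adj0, adj0, Matrix.submatrix_mul_equiv, ← Matrix.mul_kronecker_mul, one_mul]
  · rw [adj1, adj1, adj1, Matrix.submatrix_mul_equiv, ← Matrix.mul_kronecker_mul, one_mul]

lemma adj_one (N : ℕ) (m : ℕ) (hm : m < 2) :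
    adjPlace 3 N (1 : Op2 N) m = 1 := by
  interval_cases m
  · rw [adj0, Matrix.one_kronecker_one, Matrix.submatrix_one_equiv]
  · rw [adj1, Matrix.one_kronecker_one, Matrix.submatrix_one_equiv]

lemma adj_smul (N : ℕ) (c : ℂ) (X : Op2 N) (m : ℕ) (hm : m + 1 < 3) :
    adjPlace 3 N (c • X) m = c • adjPlace 3 N X m := by
  rw [adjPlace, adjPlace, dif_pos hm, dif_pos hm]
  ext x y
  simp [mul_assoc]

lemma key (N : ℕ) (A B : OpN 3 N) (hA : A * A = 1) (hB : B * B = 1)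
    (hbr : A * B * A = B * A * B) (a b c : ℂ) (h : a * b + b * c = a * c) :
    (a • A) * (b • (B * (A * B))) - (b • (B * (A * B))) * (a • A) +
      ((a • A) * (c • (A * (B * (A * (B * A))))) - (c • (A * (B * (A * (B * A))))) * (a • A)) +
      ((b • (B * (A * B))) * (c • (A * (B * (A * (B * A))))) -
        (c • (A * (B * (A * (B * A))))) * (b • (B * (A * B)))) = 0 := by
  have h5 : A * (B * (A * (B * A))) = B := by
    rw [← mul_assoc, ← mul_assoc, ← mul_assoc, hbr, mul_assoc (B * A) B B, hB, mul_one,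
      mul_assoc B A A, hA, mul_one]
  have hx1 : A * (B * (A * B)) = B * A := by
    rw [← mul_assoc, ← mul_assoc, hbr, mul_assoc (B * A) B B, hB, mul_one]
  have hx2 : (B * (A * B)) * A = A * B := by
    rw [← mul_assoc, ← hbr, mul_assoc (A * B) A A, hA, mul_one]
  have hx3 : (B * (A * B)) * B = B * A := by
    rw [mul_assoc, mul_assoc, hB, mul_one]
  have hx4 : B * (B * (A * B)) = A * B := by
    rw [← mul_assoc, hB, one_mul]
  rw [h5]
  simp only [smul_mul_assoc, mul_smul_comm, smul_smul]
  rw [hx1, hx2, hx3, hx4]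
  have hcoef1 : a * b - c * a + b * c = 0 := by linear_combination h
  have hcoef2 : a * c - b * a - c * b = 0 := by linear_combination -h
  have : (b * a) • (B * A) - (a * b) • (A * B) + ((c * a) • (A * B) - (a * c) • (B * A)) +
      ((c * b) • (B * A) - (b * c) • (A * B)) =
      (a * b - c * a + b * c) • (B * A) + (a * c - b * a - c * b) • (A * B) := by
    module
  rw [this, hcoef1, hcoef2, zero_smul, zero_smul, add_zero]

end Stmt6Aux

/-- for an involutive symmetry `F`, the braided rational `r`-matrix
`r(u,v) = (u-v)⁻¹ F` is braided skew-symmetric and satisfies the braided classical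
Yang–Baxter equation on `V^{⊗3}`. -/
theorem stmt_6 (N : ℕ) (hN : 1 ≤ N) (F : Op2 N)
    (hFinv : F * F = 1)
    (hFbraid : adjPlace 3 N F 0 * adjPlace 3 N F 1 * adjPlace 3 N F 0 =
      adjPlace 3 N F 1 * adjPlace 3 N F 0 * adjPlace 3 N F 1) :
    (∀ u v : ℂ, u ≠ v → F * ((v - u)⁻¹ • F) * F + (u - v)⁻¹ • F = 0) ∧
      (∀ u v w : ℂ, u ≠ v → u ≠ w → v ≠ w →
        (bar2 3 N F F ((u - v)⁻¹ • F) 1 2 * bar2 3 N F F ((u - w)⁻¹ • F) 1 3 -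
            bar2 3 N F F ((u - w)⁻¹ • F) 1 3 * bar2 3 N F F ((u - v)⁻¹ • F) 1 2) +
          (bar2 3 N F F ((u - v)⁻¹ • F) 1 2 * bar2 3 N F F ((v - w)⁻¹ • F) 2 3 -
            bar2 3 N F F ((v - w)⁻¹ • F) 2 3 * bar2 3 N F F ((u - v)⁻¹ • F) 1 2) +
          (bar2 3 N F F ((u - w)⁻¹ • F) 1 3 * bar2 3 N F F ((v - w)⁻¹ • F) 2 3 -
            bar2 3 N F F ((v - w)⁻¹ • F) 2 3 * bar2 3 N F F ((u - w)⁻¹ • F) 1 3) = 0) := by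
  constructor
  · intro u v huv
    rw [mul_smul_comm, smul_mul_assoc, mul_assoc]
    have h3 : F * (F * F) = F := by rw [hFinv, mul_one]
    rw [h3, ← add_smul]
    have : (v - u)⁻¹ + (u - v)⁻¹ = 0 := by
      have hne : u - v ≠ 0 := sub_ne_zero.mpr huv
      have : v - u = -(u - v) := by ring
      rw [this, inv_neg, neg_add_cancel]
    rw [this, zero_smul]
  · intro u v w huv huw hvw
    set A := adjPlace 3 N F 0 with hAdef
    set B := adjPlace 3 N F 1 with hBdef
    have hA : A * A = 1 := by
      rw [hAdef, Stmt6Aux.adj_mul N F F 0 (by norm_num), hFinv,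
        Stmt6Aux.adj_one N 0 (by norm_num)]
    have hB : B * B = 1 := by
      rw [hBdef, Stmt6Aux.adj_mul N F F 1 (by norm_num), hFinv,
        Stmt6Aux.adj_one N 1 (by norm_num)]
    have hb12 : ∀ c : ℂ, bar2 3 N F F (c • F) 1 2 = c • A := by
      intro c
      simp [bar2, chainC, chainD, chainCInv, chainDInv,
        Stmt6Aux.adj_smul N c F 0 (by norm_num), hAdef]
    have hb13 : ∀ c : ℂ, bar2 3 N F F (c • F) 1 3 = c • (B * (A * B)) := by
      intro c
      simp [bar2, chainC, chainD, chainCInv, chainDInv, List.range', List.range_succ,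
        Stmt6Aux.adj_smul N c F 0 (by norm_num), hAdef, hBdef, mul_assoc, mul_smul_comm,
        smul_mul_assoc]
    have hb23 : ∀ c : ℂ, bar2 3 N F F (c • F) 2 3 = c • (A * (B * (A * (B * A)))) := by
      intro c
      simp [bar2, chainC, chainD, chainCInv, chainDInv, List.range', List.range_succ,
        Stmt6Aux.adj_smul N c F 0 (by norm_num), hAdef, hBdef, mul_assoc, mul_smul_comm,
        smul_mul_assoc]
    rw [hb12, hb13, hb23]
    apply Stmt6Aux.key N A B hA hB hFbraid
    have h1 : u - v ≠ 0 := sub_ne_zero.mpr huv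
    have h2 : u - w ≠ 0 := sub_ne_zero.mpr huw
    have h3 : v - w ≠ 0 := sub_ne_zero.mpr hvw
    field_simp
    ring
end
end

section
/- Let (R,F) be a couple of compatible braidings on V⊗V and set R̂ := R∘F. Then for any N×N matrix A one has, on V^{⊗3}: R̂₁₂ · A_{\bar{3}} = A_{\bar{3}} · R̂₁₂, where A_{\bar{3}} := F₂₃F₁₂(A⊗I⊗I)F₁₂⁻¹F₂₃⁻¹. -/
open Matrix BigOperators

noncomputable section

/-- Placement of a one-leg operator `A` on leg `m` (0-indexed) of `V^{⊗n}`. -/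
def onePlace (n N : ℕ) (A : Matrix (Fin N) (Fin N) ℂ) (m : ℕ) : OpN n N :=
  if h : m < n then
    Matrix.of fun x y =>
      A (x ⟨m, h⟩) (y ⟨m, h⟩) * ∏ j : Fin n, if (j : ℕ) = m then 1 else (if x j = y j then 1 else 0)
  else 1

/-- `barOne n N F A m = A_{\overline{m+1}}` (so `m` is 0-indexed): `A_{\bar 1} = A ⊗ I^{⊗(n-1)}`
and `A_{\overline{m+1}} = F_{m,m+1} A_{\bar m} F_{m,m+1}`. -/
def barOne (n N : ℕ) (F : Op2 N) (A : Matrix (Fin N) (Fin N) ℂ) : ℕ → OpN n N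
  | 0 => onePlace n N A 0
  | m + 1 => adjPlace n N F m * barOne n N F A m * adjPlace n N F m

section Aux

variable {N : ℕ}

/-- Reindexing `V^{⊗3}` as `(V ⊗ V) ⊗ V`. -/
def e3 (N : ℕ) : (Fin 3 → Fin N) ≃ (Fin N × Fin N) × Fin N where
  toFun z := ((z 0, z 1), z 2)
  invFun p := ![p.1.1, p.1.2, p.2]
  left_inv z := by funext j; fin_cases j <;> simp
  right_inv p := rfl

/-- Reindexing `V^{⊗3}` as `V ⊗ (V ⊗ V)`. -/
def e3' (N : ℕ) : (Fin 3 → Fin N) ≃ Fin N × (Fin N × Fin N) where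
  toFun z := (z 0, (z 1, z 2))
  invFun p := ![p.1, p.2.1, p.2.2]
  left_inv z := by funext j; fin_cases j <;> simp
  right_inv p := rfl

lemma e3_apply (z : Fin 3 → Fin N) : e3 N z = ((z 0, z 1), z 2) := rfl

lemma e3'_apply (z : Fin 3 → Fin N) : e3' N z = (z 0, (z 1, z 2)) := rfl

open Kronecker

lemma adjPlace0_repr (B : Op2 N) :
    adjPlace 3 N B 0 = (B ⊗ₖ (1 : Matrix (Fin N) (Fin N) ℂ)).submatrix (e3 N) (e3 N) := by
  rw [adjPlace, dif_pos (by norm_num)]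
  ext x y
  simp [e3_apply, Fin.prod_univ_three, kroneckerMap_apply, one_apply, mul_comm]

lemma adjPlace1_repr (B : Op2 N) :
    adjPlace 3 N B 1 = ((1 : Matrix (Fin N) (Fin N) ℂ) ⊗ₖ B).submatrix (e3' N) (e3' N) := by
  rw [adjPlace, dif_pos (by norm_num)]
  ext x y
  simp [e3'_apply, Fin.prod_univ_three, kroneckerMap_apply, one_apply, mul_comm]

lemma onePlace0_repr (A : Matrix (Fin N) (Fin N) ℂ) :
    onePlace 3 N A 0 =
      (A ⊗ₖ (1 : Matrix (Fin N × Fin N) (Fin N × Fin N) ℂ)).submatrix (e3' N) (e3' N) := by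
  rw [onePlace, dif_pos (by norm_num)]
  ext x y
  simp only [Matrix.of_apply, submatrix_apply, e3'_apply, Equiv.coe_fn_mk, kroneckerMap_apply,
    one_apply, Fin.prod_univ_three, Prod.mk.injEq]
  norm_num
  split_ifs <;> simp_all

lemma adjPlace0_mul (B C : Op2 N) :
    adjPlace 3 N B 0 * adjPlace 3 N C 0 = adjPlace 3 N (B * C) 0 := by
  rw [adjPlace0_repr, adjPlace0_repr, adjPlace0_repr, Matrix.submatrix_mul_equiv,
    ← Matrix.mul_kronecker_mul, one_mul]

lemma adjPlace1_mul (B C : Op2 N) :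
    adjPlace 3 N B 1 * adjPlace 3 N C 1 = adjPlace 3 N (B * C) 1 := by
  rw [adjPlace1_repr, adjPlace1_repr, adjPlace1_repr, Matrix.submatrix_mul_equiv,
    ← Matrix.mul_kronecker_mul, one_mul]

lemma adjPlace0_one : adjPlace 3 N (1 : Op2 N) 0 = 1 := by
  rw [adjPlace0_repr, Matrix.one_kronecker_one, Matrix.submatrix_one_equiv]

lemma adjPlace1_one : adjPlace 3 N (1 : Op2 N) 1 = 1 := by
  rw [adjPlace1_repr, Matrix.one_kronecker_one, Matrix.submatrix_one_equiv]

lemma onePlace_comm_adjPlace1 (A : Matrix (Fin N) (Fin N) ℂ) (B : Op2 N) :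
    onePlace 3 N A 0 * adjPlace 3 N B 1 = adjPlace 3 N B 1 * onePlace 3 N A 0 := by
  rw [onePlace0_repr, adjPlace1_repr, Matrix.submatrix_mul_equiv, Matrix.submatrix_mul_equiv,
    ← Matrix.mul_kronecker_mul, ← Matrix.mul_kronecker_mul, one_mul, mul_one, one_mul, mul_one]

/-- The key algebraic manipulation, in an arbitrary monoid. -/
lemma key {M : Type*} [Monoid M] (R0 R1 F0 F1 A0 X Xi : M)
    (hXXi : X * Xi = 1) (hXiX : Xi * X = 1)
    (h1 : F0 * X = X * F1) (h2 : R0 * X = X * R1)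
    (hA : A0 * (R1 * F1) = (R1 * F1) * A0) :
    R0 * F0 * (X * A0 * Xi) = X * A0 * Xi * (R0 * F0) := by
  have hcan : ∀ a b : M, X * a = X * b → a = b := fun a b h => by
    have h' := congrArg (Xi * ·) h
    simpa [← mul_assoc, hXiX] using h'
  have h3 : R1 * F1 * Xi = Xi * (R0 * F0) := by
    apply hcan
    calc X * (R1 * F1 * Xi) = (X * R1) * F1 * Xi := by simp [mul_assoc]
      _ = (R0 * X) * F1 * Xi := by rw [h2]
      _ = R0 * (X * F1) * Xi := by rw [mul_assoc R0 X F1]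
      _ = R0 * (F0 * X) * Xi := by rw [h1]
      _ = R0 * F0 * (X * Xi) := by simp [mul_assoc]
      _ = R0 * F0 := by rw [hXXi, mul_one]
      _ = (X * Xi) * (R0 * F0) := by rw [hXXi, one_mul]
      _ = X * (Xi * (R0 * F0)) := by rw [mul_assoc]
  calc R0 * F0 * (X * A0 * Xi)
      = R0 * (F0 * X) * (A0 * Xi) := by simp [mul_assoc]
    _ = R0 * (X * F1) * (A0 * Xi) := by rw [h1]
    _ = (R0 * X) * (F1 * (A0 * Xi)) := by simp [mul_assoc]
    _ = (X * R1) * (F1 * (A0 * Xi)) := by rw [h2]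
    _ = X * ((R1 * F1) * A0) * Xi := by simp [mul_assoc]
    _ = X * (A0 * (R1 * F1)) * Xi := by rw [← hA]
    _ = (X * A0) * (R1 * F1 * Xi) := by simp [mul_assoc]
    _ = (X * A0) * (Xi * (R0 * F0)) := by rw [h3]
    _ = X * A0 * Xi * (R0 * F0) := by simp [mul_assoc]

end Aux

/-- for compatible braidings `(R,F)` and `R̂ = R∘F`, one has
`R̂₁₂ A_{\bar 3} = A_{\bar 3} R̂₁₂` on `V^{⊗3}`, where
`A_{\bar 3} = F₂₃F₁₂(A⊗I⊗I)F₁₂⁻¹F₂₃⁻¹`. -/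
theorem stmt_9 (N : ℕ) (hN : 1 ≤ N) (R F Finv : Op2 N)
    (hRunit : IsUnit R)
    (hFinv : F * Finv = 1) (hFinv' : Finv * F = 1)
    (hRbraid : adjPlace 3 N R 0 * adjPlace 3 N R 1 * adjPlace 3 N R 0 =
      adjPlace 3 N R 1 * adjPlace 3 N R 0 * adjPlace 3 N R 1)
    (hFbraid : adjPlace 3 N F 0 * adjPlace 3 N F 1 * adjPlace 3 N F 0 =
      adjPlace 3 N F 1 * adjPlace 3 N F 0 * adjPlace 3 N F 1)
    (hcomp1 : adjPlace 3 N R 0 * adjPlace 3 N F 1 * adjPlace 3 N F 0 =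
      adjPlace 3 N F 1 * adjPlace 3 N F 0 * adjPlace 3 N R 1)
    (hcomp2 : adjPlace 3 N R 1 * adjPlace 3 N F 0 * adjPlace 3 N F 1 =
      adjPlace 3 N F 0 * adjPlace 3 N F 1 * adjPlace 3 N R 0)
    (A : Matrix (Fin N) (Fin N) ℂ) :
    adjPlace 3 N (R * F) 0 *
        (adjPlace 3 N F 1 * adjPlace 3 N F 0 * onePlace 3 N A 0 *
          adjPlace 3 N Finv 0 * adjPlace 3 N Finv 1) =
      (adjPlace 3 N F 1 * adjPlace 3 N F 0 * onePlace 3 N A 0 *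
          adjPlace 3 N Finv 0 * adjPlace 3 N Finv 1) *
        adjPlace 3 N (R * F) 0 := by
  set R0 := adjPlace 3 N R 0 with hR0
  set R1 := adjPlace 3 N R 1 with hR1
  set F0 := adjPlace 3 N F 0 with hF0
  set F1 := adjPlace 3 N F 1 with hF1
  set Fi0 := adjPlace 3 N Finv 0 with hFi0
  set Fi1 := adjPlace 3 N Finv 1 with hFi1
  set A0 := onePlace 3 N A 0 with hA0
  have hRF : adjPlace 3 N (R * F) 0 = R0 * F0 := (adjPlace0_mul R F).symm
  have hF0Fi0 : F0 * Fi0 = 1 := by rw [hF0, hFi0, adjPlace0_mul, hFinv, adjPlace0_one]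
  have hFi0F0 : Fi0 * F0 = 1 := by rw [hF0, hFi0, adjPlace0_mul, hFinv', adjPlace0_one]
  have hF1Fi1 : F1 * Fi1 = 1 := by rw [hF1, hFi1, adjPlace1_mul, hFinv, adjPlace1_one]
  have hFi1F1 : Fi1 * F1 = 1 := by rw [hF1, hFi1, adjPlace1_mul, hFinv', adjPlace1_one]
  have hXXi : (F1 * F0) * (Fi0 * Fi1) = 1 := by
    calc (F1 * F0) * (Fi0 * Fi1) = F1 * (F0 * Fi0) * Fi1 := by simp [mul_assoc]
      _ = 1 := by rw [hF0Fi0, mul_one, hF1Fi1]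
  have hXiX : (Fi0 * Fi1) * (F1 * F0) = 1 := by
    calc (Fi0 * Fi1) * (F1 * F0) = Fi0 * (Fi1 * F1) * F0 := by simp [mul_assoc]
      _ = 1 := by rw [hFi1F1, mul_one, hFi0F0]
  have h1 : F0 * (F1 * F0) = (F1 * F0) * F1 := by
    rw [← mul_assoc]; exact hFbraid
  have h2 : R0 * (F1 * F0) = (F1 * F0) * R1 := by
    rw [← mul_assoc]; exact hcomp1
  have hA : A0 * (R1 * F1) = (R1 * F1) * A0 := by
    rw [hA0, hR1, hF1, adjPlace1_mul, onePlace_comm_adjPlace1]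
  have hgoal := key R0 R1 F0 F1 A0 (F1 * F0) (Fi0 * Fi1) hXXi hXiX h1 h2 hA
  rw [hRF]
  calc R0 * F0 * (F1 * F0 * A0 * Fi0 * Fi1)
      = R0 * F0 * ((F1 * F0) * A0 * (Fi0 * Fi1)) := by simp [mul_assoc]
    _ = (F1 * F0) * A0 * (Fi0 * Fi1) * (R0 * F0) := hgoal
    _ = F1 * F0 * A0 * Fi0 * Fi1 * (R0 * F0) := by simp [mul_assoc]
end
end

section
/- Let R be a Hecke symmetry with parameter q (q ∈ ℂ, q ≠ ±1, q ≠ 0) and F an involutive symmetry on V⊗V. For u ≠ v set f(u,v) := q − (q−q⁻¹)·u·(u−v)⁻¹ and, when f(u,v) ≠ 0, define the normalized braided current R-matrix R̂(u,v) := (R − (q−q⁻¹)·u·(u−v)⁻¹·I)·F·f(u,v)⁻¹. Then the unitarity relation holds: R̂(u,v) · (F·R̂(v,u)·F) = I on V⊗V for all u ≠ v with f(u,v) ≠ 0 and f(v,u) ≠ 0. -/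
open Matrix BigOperators

noncomputable section

/-- unitarity of the normalized braided trigonometric current `R`-matrix
`R̂(u,v) = (R − (q−q⁻¹)u(u−v)⁻¹ I) F f(u,v)⁻¹` with `f(u,v) = q − (q−q⁻¹)u(u−v)⁻¹`:
`R̂(u,v)·(F·R̂(v,u)·F) = I` for `u ≠ v` with `f(u,v) ≠ 0` and `f(v,u) ≠ 0`. -/
theorem stmt_17 (N : ℕ) (hN : 1 ≤ N) (R F : Op2 N) (q : ℂ)
    (hq1 : q ≠ 1) (hq2 : q ≠ -1) (hq0 : q ≠ 0)
    (hHecke : (R - q • 1) * (R + q⁻¹ • 1) = 0)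
    (hRunit : IsUnit R) (hFinv : F * F = 1)
    (hRbraid : adjPlace 3 N R 0 * adjPlace 3 N R 1 * adjPlace 3 N R 0 =
      adjPlace 3 N R 1 * adjPlace 3 N R 0 * adjPlace 3 N R 1)
    (hFbraid : adjPlace 3 N F 0 * adjPlace 3 N F 1 * adjPlace 3 N F 0 =
      adjPlace 3 N F 1 * adjPlace 3 N F 0 * adjPlace 3 N F 1)
    (u v : ℂ) (huv : u ≠ v)
    (hf1 : q - (q - q⁻¹) * u * (u - v)⁻¹ ≠ 0)
    (hf2 : q - (q - q⁻¹) * v * (v - u)⁻¹ ≠ 0) :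
    ((q - (q - q⁻¹) * u * (u - v)⁻¹)⁻¹ •
          ((R - ((q - q⁻¹) * u * (u - v)⁻¹) • 1) * F)) *
        (F * ((q - (q - q⁻¹) * v * (v - u)⁻¹)⁻¹ •
          ((R - ((q - q⁻¹) * v * (v - u)⁻¹) • 1) * F)) * F) = 1 := by
  set a := (q - q⁻¹) * u * (u - v)⁻¹ with ha
  set b := (q - q⁻¹) * v * (v - u)⁻¹ with hb
  have hsub : u - v ≠ 0 := sub_ne_zero.mpr huv
  have hsub' : v - u ≠ 0 := sub_ne_zero.mpr (Ne.symm huv)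
  have habsum : a + b = q - q⁻¹ := by
    rw [ha, hb]
    field_simp
    ring
  have hqq : q * q⁻¹ = 1 := mul_inv_cancel₀ hq0
  have hRR : R * R = (q - q⁻¹) • R + 1 := by
    have h : (R - q • 1) * (R + q⁻¹ • 1)
        = R * R - ((q - q⁻¹) • R + (q * q⁻¹) • 1) := by
      simp only [mul_add, sub_mul, smul_mul_assoc, mul_smul_comm, mul_one, one_mul,
        smul_smul, sub_smul, smul_add, add_smul]
      module
    rw [h, hqq, one_smul] at hHecke
    exact sub_eq_zero.mp hHecke
  have hprod : (R - a • 1) * (R - b • 1) = (1 + a * b) • 1 := by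
    have h : (R - a • 1) * (R - b • 1)
        = R * R - (a + b) • R + (a * b) • 1 := by
      simp only [mul_sub, sub_mul, smul_mul_assoc, mul_smul_comm, mul_one, one_mul,
        smul_smul, add_smul, smul_add, mul_comm b a]
      module
    rw [h, hRR, habsum]
    module
  have hff : (q - a) * (q - b) = 1 + a * b := by
    have h : (q - a) * (q - b) = q * q - q * (a + b) + a * b := by ring
    rw [h, habsum]
    field_simp
    ring
  have hcoef : (q - a)⁻¹ * (q - b)⁻¹ * (1 + a * b) = 1 := by
    rw [← hff]
    field_simp
  calc ((q - a)⁻¹ • ((R - a • 1) * F)) * (F * ((q - b)⁻¹ • ((R - b • 1) * F)) * F)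
      = ((q - a)⁻¹ * (q - b)⁻¹) • ((R - a • 1) * (F * F) * (R - b • 1) * (F * F)) := by
        simp only [Matrix.smul_mul, Matrix.mul_smul, smul_smul]
        rw [mul_comm ((q-b)⁻¹)]
        congr 1
        noncomm_ring
    _ = ((q - a)⁻¹ * (q - b)⁻¹) • ((1 + a * b) • (1 : Op2 N)) := by
        rw [hFinv, mul_one, mul_one, hprod]
    _ = 1 := by rw [smul_smul, hcoef, one_smul]
end
end
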